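/- Let 0 < p < 1, let t ≥ 0, let n, k, ℓ be positive integers with ℓ ≤ k ≤ n, and let A and B be k-element subsets of [n] with |A ∩ B| = ℓ. Then in G(n,p), Pr( A and B are both t-sparse ) ≤ b^{C(ℓ,2)} · ( Pr( A is t-sparse ) )², where b = 1/(1−p) and C(ℓ,2) = ℓ(ℓ−1)/2. -/

import Mathlib

open MeasureTheory Filter Real Asymptotics
open scoped ENNReal Classical

/-- Bernoulli measure on `Bool` with success probability `p`. -/
noncomputable def bern (p : ℝ) : Measure Bool :=
  (ENNReal.ofReal p) • Measure.dirac true + (ENNReal.ofReal (1 - p)) • Measure.dirac false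

instance bern.isFiniteMeasure (p : ℝ) : IsFiniteMeasure (bern p) := by
  constructor
  simp [bern, Measure.add_apply, Measure.smul_apply]

/-- The Erdős–Rényi random graph measure `G(n,p)`: each potential edge (a non-diagonal
element of `Sym2 (Fin n)`) is present independently with probability `p`. -/
noncomputable def gnp (n : ℕ) (p : ℝ) : Measure (Sym2 (Fin n) → Bool) :=
  Measure.pi fun _ => bern p

/-- Number of edges of the graph `ω` induced by the vertex set `S`. -/
noncomputable def edgeCount {n : ℕ} (ω : Sym2 (Fin n) → Bool) (S : Finset (Fin n)) : ℕ :=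
  Set.ncard {e : Sym2 (Fin n) | ¬ e.IsDiag ∧ (∀ v ∈ e, v ∈ S) ∧ ω e = true}

/-- `S` is `t`-sparse in `ω`: the induced subgraph has average degree at most `t`. -/
def TSparse {n : ℕ} (t : ℝ) (ω : Sym2 (Fin n) → Bool) (S : Finset (Fin n)) : Prop :=
  (edgeCount ω S : ℝ) ≤ t * S.card / 2

/-- The `t`-sparsity number: the largest size of a `t`-sparse vertex subset. -/
noncomputable def sparsityNumber {n : ℕ} (t : ℝ) (ω : Sym2 (Fin n) → Bool) : ℕ :=
  sSup {k : ℕ | ∃ S : Finset (Fin n), S.card = k ∧ TSparse t ω S}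

/-- The quantity `ᾱ_{t,p}(n)`. -/
noncomputable def alphaTP (t p : ℝ) (n : ℕ) : ℝ :=
  2 * Real.logb (1/(1-p)) n
    + (t - 2) * Real.logb (1/(1-p)) (Real.logb (1/(1-p)) (n * p))
    - t * Real.logb (1/(1-p)) t
    + t * Real.logb (1/(1-p)) (2 * (1/(1-p)) * p * Real.exp 1)
    + 2 * Real.logb (1/(1-p)) (Real.exp 1 / 2) + 1

/-- The Fenchel–Legendre transform `Λ*` for the Bernoulli(`p`) distribution. -/
noncomputable def LambdaStar (p x : ℝ) : ℝ :=
  x * Real.log (x / p) + (1 - x) * Real.log ((1 - x) / (1 - p))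

/-- The number of `t`-sparse `k`-element vertex subsets in `ω`. -/
noncomputable def sparseCount {n : ℕ} (t : ℝ) (k : ℕ) (ω : Sym2 (Fin n) → Bool) : ℕ :=
  Set.ncard {S : Finset (Fin n) | S.card = k ∧ TSparse t ω S}

/-- The expected number of `t`-sparse `k`-element subsets of `[n]` in `G(n,p)`. -/
noncomputable def expSparseCount (n : ℕ) (p t : ℝ) (k : ℕ) : ℝ :=
  ∫ ω, (sparseCount t k ω : ℝ) ∂(gnp n p)

/-- A fixed `k`-element subset of `Fin n` (when `k ≤ n`): the first `k` vertices. -/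
def segA (n k : ℕ) : Finset (Fin n) := Finset.univ.filter (fun i => (i : ℕ) < k)

/-- A fixed `k`-element subset of `Fin n` meeting `segA n k` in exactly `ℓ` vertices
(when `ℓ ≤ k` and `2k - ℓ ≤ n`). -/
def segB (n k ℓ : ℕ) : Finset (Fin n) :=
  Finset.univ.filter (fun i => k - ℓ ≤ (i : ℕ) ∧ (i : ℕ) < 2 * k - ℓ)

/-- `p(k,ℓ)`: the probability that two fixed `k`-element subsets of `[n]` overlapping in
exactly `ℓ` vertices are both `t`-sparse in `G(n,p)`. -/
noncomputable def pkl (n : ℕ) (p t : ℝ) (k ℓ : ℕ) : ℝ :=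
  (gnp n p {ω | TSparse t ω (segA n k) ∧ TSparse t ω (segB n k ℓ)}).toReal

/-- `f(ℓ) = C(n,k)·C(k,ℓ)·C(n−k,k−ℓ)·p(k,ℓ)`. -/
noncomputable def fSum (n : ℕ) (p t : ℝ) (k ℓ : ℕ) : ℝ :=
  (n.choose k : ℝ) * (k.choose ℓ) * ((n - k).choose (k - ℓ)) * pkl n p t k ℓ

/-!
Let `Z` be the event that `B` is still `t`-sparse after all edges inside `A ∩ B` are deleted.
Deleting edges preserves sparsity, so `{A, B sparse} ⊆ {A sparse} ∩ Z`, and the two events on the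
right are determined by disjoint sets of potential edges, hence independent. Conversely, `Z`
together with the event that no edge lies inside `A ∩ B`, which is independent of `Z` and has
probability `(1 - p) ^ C(ℓ, 2)`, forces `B` to be sparse; so `P(Z) ≤ b ^ C(ℓ, 2) P(B sparse)`, and
`P(B sparse) = P(A sparse)` by relabelling the vertices.
-/

lemma DependsOn.comp_piecewise {ι β : Type*} {α : ι → Type*} {f : (∀ i, α i) → β} {J : Set ι}
    (hf : DependsOn f J) (I : Finset ι) [∀ i, Decidable (i ∈ I)] (y : ∀ i, α i) :
    DependsOn (fun x ↦ f (I.piecewise y x)) (J \ I) := by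
  refine fun x x' h ↦ hf fun i hi ↦ ?_
  by_cases hiI : i ∈ I
  · simp only [Finset.piecewise_eq_of_mem _ _ _ hiI]
  · simp only [Finset.piecewise_eq_of_notMem _ _ _ hiI, h i ⟨hi, hiI⟩]

section ProductMeasure

open Set

variable {ι : Type*} [Fintype ι] {α : ι → Type*} [∀ i, MeasurableSpace (α i)]
  {μ : ∀ i, Measure (α i)} [∀ i, IsProbabilityMeasure (μ i)]

lemma measure_pi_inter_of_dependsOn {I : Set ι} {s u : Set (∀ i, α i)}
    (hs : DependsOn (· ∈ s) I) (hu : DependsOn (· ∈ u) Iᶜ) :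
    Measure.pi μ (s ∩ u) = Measure.pi μ s * Measure.pi μ u := by
  classical
  let φ := MeasurableEquiv.piEquivPiSubtypeProd α (· ∈ I)
  have hφ := measurePreserving_piEquivPiSubtypeProd μ (· ∈ I)
  have hs' : s = φ ⁻¹' (((fun ω ↦ (φ ω).1) '' s) ×ˢ univ) := by
    ext ω
    refine ⟨fun h ↦ ⟨⟨ω, h, rfl⟩, trivial⟩, fun ⟨⟨ω', h', hω'⟩, _⟩ ↦ ?_⟩
    exact (hs fun i hi ↦ congrFun hω' ⟨i, hi⟩).mp h'
  have hu' : u = φ ⁻¹' (univ ×ˢ ((fun ω ↦ (φ ω).2) '' u)) := by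
    ext ω
    refine ⟨fun h ↦ ⟨trivial, ⟨ω, h, rfl⟩⟩, fun ⟨_, ⟨ω', h', hω'⟩⟩ ↦ ?_⟩
    exact (hu fun i hi ↦ congrFun hω' ⟨i, hi⟩).mp h'
  rw [hs', hu', ← preimage_inter, prod_inter_prod, inter_univ, univ_inter,
    hφ.measure_preimage_equiv, hφ.measure_preimage_equiv, hφ.measure_preimage_equiv,
    Measure.prod_prod, Measure.prod_prod, Measure.prod_prod, measure_univ, measure_univ,
    one_mul, mul_one]

lemma measure_pi_piecewise_preimage_mul_le (I : Finset ι) [∀ i, Decidable (i ∈ I)]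
    (y : ∀ i, α i) (E : Set (∀ i, α i)) :
    Measure.pi μ {ω | I.piecewise y ω ∈ E} * ∏ i ∈ I, μ i {y i} ≤ Measure.pi μ E := by
  let F : Set (∀ i, α i) := (I : Set ι).pi fun i ↦ {y i}
  have hF : DependsOn (· ∈ F) I := fun ω ω' h ↦
    propext <| forall₂_congr fun i hi ↦ by rw [mem_singleton_iff, mem_singleton_iff, h i hi]
  have hE : DependsOn (· ∈ {ω | I.piecewise y ω ∈ E}) (I : Set ι)ᶜ := by
    rw [compl_eq_univ_sdiff]
    exact (dependsOn_univ (· ∈ E)).comp_piecewise I y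
  rw [← Measure.pi_pi_finset, mul_comm, ← measure_pi_inter_of_dependsOn hF hE]
  refine measure_mono fun ω ⟨hωF, hωE⟩ ↦ ?_
  have : I.piecewise y ω = ω := by
    rw [I.piecewise_congr (fun i hi ↦ (hωF i hi).symm) (fun _ _ ↦ rfl), I.piecewise_same]
  exact this ▸ hωE

lemma measure_pi_preimage_comp_perm {β : Type*} [MeasurableSpace β] (ν : Measure β)
    [SigmaFinite ν] (e : ι ≃ ι) (E : Set (ι → β)) :
    Measure.pi (fun _ ↦ ν) {ω | ω ∘ e ∈ E} = Measure.pi (fun _ ↦ ν) E :=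
  (measurePreserving_arrowCongr' (fun _ ↦ ν) (fun _ ↦ ν) e.symm (MeasurableEquiv.refl β)
    fun _ ↦ ⟨measurable_id, Measure.map_id⟩).measure_preimage_equiv E

end ProductMeasure

def Equiv.sym2Map {α β : Type*} (e : α ≃ β) : Sym2 α ≃ Sym2 β where
  toFun := Sym2.map e
  invFun := Sym2.map e.symm
  left_inv z := by simp [Sym2.map_map]
  right_inv z := by simp [Sym2.map_map]

section InnerEdges

open Finset

variable {V : Type*} [DecidableEq V]

def innerEdges (s : Finset V) : Finset (Sym2 V) := {e ∈ s.sym2 | ¬ e.IsDiag}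

lemma mem_innerEdges {s : Finset V} {e : Sym2 V} :
    e ∈ innerEdges s ↔ ¬ e.IsDiag ∧ ∀ v ∈ e, v ∈ s := by
  rw [innerEdges, mem_filter, mem_sym2_iff, and_comm]

lemma card_innerEdges (s : Finset V) : #(innerEdges s) = (#s).choose 2 := by
  rw [innerEdges, sym2_eq_image, Sym2.filter_image_mk_not_isDiag, Sym2.card_image_offDiag]

lemma innerEdges_inter (s t : Finset V) : innerEdges (s ∩ t) = innerEdges s ∩ innerEdges t := by
  ext e
  simp only [mem_innerEdges, mem_inter]
  grind

lemma innerEdges_map {W : Type*} [DecidableEq W] (f : V ↪ W) (s : Finset V) :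
    innerEdges (s.map f) = (innerEdges s).map f.sym2Map := by
  rw [innerEdges, innerEdges, sym2_map, filter_map]
  congr 1
  ext e
  simp [Sym2.isDiag_map f.injective]

end InnerEdges

section RandomGraph

open Finset

variable {n : ℕ}

lemma isProbabilityMeasure_bern {p : ℝ} (h0 : 0 ≤ p) (h1 : p ≤ 1) :
    IsProbabilityMeasure (bern p) := by
  constructor
  simp only [bern, Measure.coe_add, Measure.coe_smul, Pi.add_apply, Pi.smul_apply,
    measure_univ, smul_eq_mul, mul_one]
  rw [← ENNReal.ofReal_add h0 (by linarith)]
  norm_num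

instance gnp.isFiniteMeasure (n : ℕ) (p : ℝ) : IsFiniteMeasure (gnp n p) := by
  unfold gnp
  infer_instance

lemma bern_singleton_false (p : ℝ) : bern p {false} = ENNReal.ofReal (1 - p) := by
  simp [bern]

lemma edgeCount_eq_card_filter (ω : Sym2 (Fin n) → Bool) (S : Finset (Fin n)) :
    edgeCount ω S = #{e ∈ innerEdges S | ω e = true} := by
  rw [edgeCount, ← Set.ncard_coe_finset]
  congr 1
  ext e
  simp [mem_innerEdges, and_assoc]

lemma TSparse.of_le {t : ℝ} {ω ω' : Sym2 (Fin n) → Bool} {S : Finset (Fin n)} (h : ω' ≤ ω)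
    (hS : TSparse t ω S) : TSparse t ω' S := by
  refine le_trans ?_ hS
  rw [edgeCount_eq_card_filter, edgeCount_eq_card_filter]
  exact_mod_cast card_le_card <| monotone_filter_right _ fun e _ ↦ Bool.le_iff_imp.mp (h e)

lemma dependsOn_tSparse (t : ℝ) (S : Finset (Fin n)) :
    DependsOn (TSparse t · S) (innerEdges S : Set (Sym2 (Fin n))) := fun ω ω' h ↦ by
  simp only [TSparse, edgeCount_eq_card_filter]
  rw [filter_congr fun e he ↦ by rw [h e he]]

lemma tSparse_comp_sym2Map (t : ℝ) (σ : Equiv.Perm (Fin n)) (ω : Sym2 (Fin n) → Bool)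
    (S : Finset (Fin n)) : TSparse t (ω ∘ σ.sym2Map) S ↔ TSparse t ω (S.map σ.toEmbedding) := by
  simp only [TSparse, edgeCount_eq_card_filter, innerEdges_map, filter_map, card_map]
  rfl

lemma gnp_tSparse_eq_of_card_eq (p t : ℝ) {S T : Finset (Fin n)} (h : #S = #T) :
    gnp n p {ω | TSparse t ω S} = gnp n p {ω | TSparse t ω T} := by
  obtain ⟨σ, rfl⟩ := Equiv.Perm.exists_map_finset_eq S T h
  rw [gnp, ← measure_pi_preimage_comp_perm _ σ.sym2Map]
  congr 1
  ext ω
  exact tSparse_comp_sym2Map t σ ω S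

lemma gnp_piecewise_false_preimage_mul_le {p : ℝ} (h0 : 0 ≤ p) (h1 : p ≤ 1)
    (I : Finset (Sym2 (Fin n))) (E : Set (Sym2 (Fin n) → Bool)) :
    gnp n p {ω | I.piecewise (fun _ ↦ false) ω ∈ E} * ENNReal.ofReal (1 - p) ^ #I ≤ gnp n p E := by
  have := isProbabilityMeasure_bern h0 h1
  simpa [gnp, bern_singleton_false] using
    measure_pi_piecewise_preimage_mul_le (μ := fun _ ↦ bern p) I (fun _ ↦ false) E

end RandomGraph

theorem overlap_correlation_bound_general (p t : ℝ) (hp0 : 0 < p) (hp1 : p < 1)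
    (n k l : ℕ) (A B : Finset (Fin n)) (hA : A.card = k) (hB : B.card = k)
    (hAB : (A ∩ B).card = l) :
    (gnp n p {ω | TSparse t ω A ∧ TSparse t ω B}).toReal
      ≤ (1 / (1 - p)) ^ (l.choose 2) * ((gnp n p {ω | TSparse t ω A}).toReal) ^ 2 := by
  have := isProbabilityMeasure_bern hp0.le hp1.le
  set SA := {ω | TSparse t ω A}
  set SB := {ω | TSparse t ω B}
  set ZB := {ω | (innerEdges (A ∩ B)).piecewise (fun _ ↦ false) ω ∈ SB}
  have hsub : {ω | TSparse t ω A ∧ TSparse t ω B} ⊆ SA ∩ ZB := fun ω hω ↦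
    ⟨hω.1, hω.2.of_le (Finset.piecewise_le_of_le_of_le _ (fun _ ↦ Bool.false_le _) le_rfl)⟩
  have hdisj :
      (innerEdges B : Set (Sym2 (Fin n))) \ innerEdges (A ∩ B) ⊆ (innerEdges A : Set _)ᶜ := by
    rw [innerEdges_inter, Finset.coe_inter, Set.sdiff_inter_self_eq_sdiff]
    exact Set.sdiff_subset_compl _ _
  have hindep : gnp n p (SA ∩ ZB) = gnp n p SA * gnp n p ZB :=
    measure_pi_inter_of_dependsOn (dependsOn_tSparse t A)
      (((dependsOn_tSparse t B).comp_piecewise _ _).mono hdisj)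
  have hclear : (gnp n p ZB).toReal ≤ (1 / (1 - p)) ^ l.choose 2 * (gnp n p SA).toReal := by
    have h := ENNReal.toReal_mono (measure_ne_top _ _)
      (gnp_piecewise_false_preimage_mul_le hp0.le hp1.le (innerEdges (A ∩ B)) SB)
    rw [ENNReal.toReal_mul, ENNReal.toReal_pow, ENNReal.toReal_ofReal (by linarith),
      card_innerEdges, hAB, gnp_tSparse_eq_of_card_eq p t (hB.trans hA.symm)] at h
    rwa [one_div_pow, one_div_mul_eq_div, le_div_iff₀ (by bound)]
  calc (gnp n p {ω | TSparse t ω A ∧ TSparse t ω B}).toReal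
      ≤ (gnp n p (SA ∩ ZB)).toReal := ENNReal.toReal_mono (measure_ne_top _ _) (measure_mono hsub)
    _ = (gnp n p SA).toReal * (gnp n p ZB).toReal := by rw [hindep, ENNReal.toReal_mul]
    _ ≤ (gnp n p SA).toReal * ((1 / (1 - p)) ^ l.choose 2 * (gnp n p SA).toReal) := by gcongr
    _ = _ := by ring

/-- correlation bound for two overlapping `t`-sparse sets. -/
theorem overlap_correlation_bound (p t : ℝ) (hp0 : 0 < p) (hp1 : p < 1) (ht : 0 ≤ t)
    (n k l : ℕ) (hl : 0 < l) (hlk : l ≤ k) (hkn : k ≤ n)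
    (A B : Finset (Fin n)) (hA : A.card = k) (hB : B.card = k) (hAB : (A ∩ B).card = l) :
    (gnp n p {ω | TSparse t ω A ∧ TSparse t ω B}).toReal
      ≤ (1 / (1 - p)) ^ (l.choose 2) * ((gnp n p {ω | TSparse t ω A}).toReal) ^ 2 :=
  overlap_correlation_bound_general p t hp0 hp1 n k l A B hA hB hAB
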